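/- arXiv:0901.1678 — 4 statements merged into one kernel-verified Lean document; each statement's English description precedes it below -/
import Mathlib

section
/- Let H be an m-hypergraph. Every 2-cover of H is a sum of two 1-covers if and only if, for every independent set S of H, the 2-cover A_S is a sum of two 1-covers. -/
open MvPolynomial Finset

noncomputable section

/-- A `k`-cover of a hypergraph with edge set `E`: a nonzero tuple whose entries
sum to at least `k` over every edge. -/
def IsCover {V : Type*} (E : Finset (Finset V)) (k : ℕ) (a : V → ℕ) : Prop :=
  a ≠ 0 ∧ ∀ e ∈ E, k ≤ ∑ i ∈ e, a i

/-- `a` is a sum of two 1-covers. -/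
def SumTwoOneCovers {V : Type*} (E : Finset (Finset V)) (a : V → ℕ) : Prop :=
  ∃ b c : V → ℕ, IsCover E 1 b ∧ IsCover E 1 c ∧ a = b + c

/-- An independent set: no edge is contained in `S`. -/
def IsIndep {V : Type*} (E : Finset (Finset V)) (S : Finset V) : Prop :=
  ∀ e ∈ E, ¬ e ⊆ S

/-- `i` is in the neighborhood of `S`: `i ∉ S` and some edge consists of `i`
together with vertices of `S`. -/
def InNbhd {V : Type*} (E : Finset (Finset V)) (S : Finset V) (i : V) : Prop :=
  i ∉ S ∧ ∃ e ∈ E, i ∈ e ∧ ∀ j ∈ e, j ≠ i → j ∈ S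

open Classical in
/-- The 2-cover `A_S` attached to an independent set `S`:
`0` on `S`, `2` on `N(S)`, and `1` elsewhere. -/
noncomputable def indepCover {V : Type*} (E : Finset (Finset V)) (S : Finset V) : V → ℕ :=
  fun i => if i ∈ S then 0 else if InNbhd E S i then 2 else 1

/-- The Alexander dual of the edge ideal: `⋂_{edges e} (x_i : i ∈ e)`. -/
noncomputable def dualIdeal {V : Type*} (K : Type*) [Field K] (E : Finset (Finset V)) :
    Ideal (MvPolynomial V K) :=
  ⨅ e ∈ E, Ideal.span (X '' (e : Set V))

/-- The monomial `x_1^{a_1} ⋯ x_n^{a_n}` attached to a tuple `a`. -/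
noncomputable def coverMonomial {V : Type*} [Fintype V] (K : Type*) [Field K] (a : V → ℕ) :
    MvPolynomial V K :=
  ∏ i, X i ^ a i

/-- Connectedness of a hypergraph: any two vertices are linked by a chain of
vertices in which consecutive vertices share an edge. -/
def HConnected {V : Type*} (E : Finset (Finset V)) : Prop :=
  ∀ x y : V, ∃ l : List V, l.head? = some x ∧ l.getLast? = some y ∧
    l.Chain' fun a b => ∃ e ∈ E, a ∈ e ∧ b ∈ e

/-- The cyclic 3-hypergraph with edges `{x_1,x_2,x_3}, {x_3,x_4,x_5}, …`
(0-based: `{2j, 2j+1, 2j+2}` modulo `n`). -/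
def cyc3 (n : ℕ) (hn : 0 < n) : Finset (Finset (Fin n)) :=
  (Finset.range ((n + 1) / 2)).image fun j =>
    ({⟨(2 * j) % n, Nat.mod_lt _ hn⟩, ⟨(2 * j + 1) % n, Nat.mod_lt _ hn⟩,
      ⟨(2 * j + 2) % n, Nat.mod_lt _ hn⟩} : Finset (Fin n))

/-- The alternating tuple: `1` on odd vertices `x_1, x_3, …` (0-based even
indices), `0` on even vertices. -/
def altCover (n : ℕ) : Fin n → ℕ :=
  fun i => if (i : ℕ) % 2 = 0 then 1 else 0

/-!
Each `A_S` of an independent set is a 2-cover, which gives one direction. Conversely, a 2-cover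
`a` dominates `A_S` for its zero set `S` (which is independent), and a tuple dominating a sum of
two 1-covers is again one: add the surplus to either summand.
-/

section Covers

variable {V : Type*} {E : Finset (Finset V)}

theorem IsCover.mono {k : ℕ} {a a' : V → ℕ} (ha : IsCover E k a) (hle : a ≤ a') :
    IsCover E k a' :=
  ⟨fun h => ha.1 (le_antisymm (h ▸ hle) bot_le),
    fun e he => (ha.2 e he).trans (Finset.sum_le_sum fun i _ => hle i)⟩

theorem SumTwoOneCovers.mono {a a' : V → ℕ} (ha : SumTwoOneCovers E a) (hle : a ≤ a') :
    SumTwoOneCovers E a' := by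
  obtain ⟨b, c, hb, hc, rfl⟩ := ha
  refine ⟨b, c + (a' - (b + c)), hb, hc.mono le_self_add, ?_⟩
  rw [← add_assoc, add_tsub_cancel_of_le hle]

end Covers

section IndepCover

variable {V : Type*} {E : Finset (Finset V)} {S : Finset V} {i : V}

theorem indepCover_of_mem (hi : i ∈ S) : indepCover E S i = 0 := by
  simp [indepCover, hi]

theorem indepCover_of_inNbhd (hi : InNbhd E S i) : indepCover E S i = 2 := by
  simp [indepCover, hi, hi.1]

theorem indepCover_of_notMem_of_not_inNbhd (hS : i ∉ S) (hN : ¬ InNbhd E S i) :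
    indepCover E S i = 1 := by
  simp [indepCover, hS, hN]

theorem one_le_indepCover (hi : i ∉ S) : 1 ≤ indepCover E S i := by
  unfold indepCover
  split_ifs <;> simp_all

/-- An edge meeting the complement of `S` in a single vertex puts that vertex in `N(S)`;
otherwise it has two vertices outside `S`. -/
theorem two_le_sum_indepCover {e : Finset V} (he : e ∈ E) (heS : ¬ e ⊆ S) :
    2 ≤ ∑ j ∈ e, indepCover E S j := by
  classical
  obtain ⟨i, hie, hiS⟩ := Finset.not_subset.mp heS
  by_cases hpair : ∃ j ∈ e, j ∉ S ∧ j ≠ i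
  · obtain ⟨j, hje, hjS, hji⟩ := hpair
    calc 2 ≤ indepCover E S i + indepCover E S j :=
          add_le_add (one_le_indepCover hiS) (one_le_indepCover hjS)
      _ = ∑ k ∈ {i, j}, indepCover E S k := (Finset.sum_pair hji.symm).symm
      _ ≤ ∑ k ∈ e, indepCover E S k :=
          Finset.sum_le_sum_of_subset (Finset.insert_subset hie (Finset.singleton_subset_iff.mpr hje))
  · push Not at hpair
    have hN : InNbhd E S i :=
      ⟨hiS, e, he, hie, fun j hj hji => by_contra fun hjS => hji (hpair j hj hjS)⟩
    calc 2 = indepCover E S i := (indepCover_of_inNbhd hN).symm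
      _ ≤ ∑ k ∈ e, indepCover E S k := Finset.single_le_sum (fun _ _ => Nat.zero_le _) hie

theorem IsIndep.isCover_indepCover (hE : E.Nonempty) (hS : IsIndep E S) :
    IsCover E 2 (indepCover E S) := by
  refine ⟨fun h0 => ?_, fun e he => two_le_sum_indepCover he (hS e he)⟩
  obtain ⟨e, he⟩ := hE
  obtain ⟨i, -, hiS⟩ := Finset.not_subset.mp (hS e he)
  simpa [h0] using one_le_indepCover (E := E) hiS

end IndepCover

section ZeroSet

variable {V : Type*} [Fintype V] {E : Finset (Finset V)} {a : V → ℕ}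

theorem isIndep_zeroSet (ha : ∀ e ∈ E, 1 ≤ ∑ i ∈ e, a i) :
    IsIndep E {i | a i = 0} := by
  intro e he heS
  have hzero : ∑ i ∈ e, a i = 0 :=
    Finset.sum_eq_zero fun i hi => (Finset.mem_filter.mp (heS hi)).2
  have := ha e he
  omega

/-- On `N(S)` for the zero set `S` of `a`, the witnessing edge carries `a` only at that vertex. -/
theorem indepCover_zeroSet_le (ha : ∀ e ∈ E, 2 ≤ ∑ i ∈ e, a i) :
    indepCover E {i | a i = 0} ≤ a := by
  intro i
  by_cases hiS : i ∈ ({i | a i = 0} : Finset V)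
  · rw [indepCover_of_mem hiS]
    exact Nat.zero_le _
  have hai : a i ≠ 0 := by simpa using hiS
  by_cases hN : InNbhd E {i | a i = 0} i
  · obtain ⟨-, e, he, hie, hrest⟩ := hN
    have hsum : ∑ j ∈ e, a j = a i :=
      Finset.sum_eq_single_of_mem i hie fun j hj hji => by simpa using hrest j hj hji
    rw [indepCover_of_inNbhd ⟨hiS, e, he, hie, hrest⟩, ← hsum]
    exact ha e he
  · rw [indepCover_of_notMem_of_not_inNbhd hiS hN]
    exact Nat.one_le_iff_ne_zero.mpr hai

end ZeroSet

theorem stmt3_general {n : ℕ} (E : Finset (Finset (Fin n))) (hE : E.Nonempty) :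
    (∀ a : Fin n → ℕ, IsCover E 2 a → SumTwoOneCovers E a) ↔
      (∀ S : Finset (Fin n), IsIndep E S → SumTwoOneCovers E (indepCover E S)) := by
  refine ⟨fun h S hS => h _ (hS.isCover_indepCover hE), fun h a ha => ?_⟩
  have hind : IsIndep E {i | a i = 0} :=
    isIndep_zeroSet fun e he => one_le_two.trans (ha.2 e he)
  exact (h _ hind).mono (indepCover_zeroSet_le ha.2)

theorem stmt3 {n m : ℕ} (E : Finset (Finset (Fin n))) (hE : E.Nonempty)
    (hm : ∀ e ∈ E, e.card = m) :
    (∀ a : Fin n → ℕ, IsCover E 2 a → SumTwoOneCovers E a) ↔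
      (∀ S : Finset (Fin n), IsIndep E S → SumTwoOneCovers E (indepCover E S)) :=
  stmt3_general E hE
end
end

section
/- Let H be an m-hypergraph of size n and {i_1,...,i_q} a subset of vertex indices with q ≥ m. Then the ideal (x_{i_1},...,x_{i_q}) ⊆ K[x_1,...,x_n] is an associated prime of (I(H)^∨)^2 if and only if (x_{i_1},...,x_{i_q}) ⊆ K[x_{i_1},...,x_{i_q}] is an associated prime of (I(H')^∨)^2, where H' is the induced subhypergraph of H on {x_{i_1},...,x_{i_q}}. -/
/-!
Let `P = (x_i : i ∈ S)` and `w = ∏_{j ∉ S} x_j`. Every edge `e ⊄ S` contains some `x_j` with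
`j ∉ S`, so `w` lies in its edge prime; hence
`w² · (I(H')^∨)² ⊆ (I(H)^∨)² ⊆ (I(H')^∨)²`, with `I(H')^∨` read in `K[x_1, …, x_n]`. As `w ∉ P`,
`P` is a colon ideal `(· : f)` of one square iff it is one of the other. Writing
`K[x_1, …, x_n] = K[x_S][x_j : j ∉ S]`, both `P` and `I(H')^∨` are extended from `K[x_S]`, and
colon ideals of an extended ideal are computed coefficientwise, so the associated primes of the
extension are exactly the extensions of the associated primes.
-/

open MvPolynomial Finset

noncomputable section

section AssociatedPrimes

variable {R R' : Type*} [CommRing R] [CommRing R']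

theorem Ideal.colon_bot_quotient_mk (J : Ideal R) (f : R) :
    (⊥ : Submodule R (R ⧸ J)).colon {Ideal.Quotient.mk J f} = J.colon {f} := by
  ext r
  rw [Submodule.mem_colon_singleton, Submodule.mem_colon_singleton, Submodule.mem_bot,
    smul_eq_mul, Algebra.smul_def, Ideal.Quotient.algebraMap_eq, ← map_mul,
    Ideal.Quotient.eq_zero_iff_mem]

theorem isAssociatedPrime_quotient_iff [IsNoetherianRing R] {P J : Ideal R} :
    IsAssociatedPrime P (R ⧸ J) ↔ P.IsPrime ∧ ∃ f, P = J.colon {f} := by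
  simp only [isAssociatedPrime_iff, Ideal.Quotient.mk_surjective.exists,
    Ideal.colon_bot_quotient_mk]

theorem isAssociatedPrime_quotient_iff_of_mul_le [IsNoetherianRing R] {P I J : Ideal R} {w : R}
    (hw : w ∉ P) (hJI : J ≤ I) (hIJ : I * Ideal.span {w} ≤ J) :
    IsAssociatedPrime P (R ⧸ J) ↔ IsAssociatedPrime P (R ⧸ I) := by
  have hIw : ∀ x ∈ I, x * w ∈ J := fun x hx =>
    hIJ (Ideal.mul_mem_mul hx (Ideal.mem_span_singleton_self w))
  simp only [isAssociatedPrime_quotient_iff, Submodule.ext_iff, Submodule.mem_colon_singleton,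
    smul_eq_mul]
  refine and_congr_right fun hP => ?_
  have cancel : ∀ r, r * w ∈ P → r ∈ P := fun r h => (hP.mem_or_mem h).resolve_right hw
  constructor
  · rintro ⟨f, hf⟩
    refine ⟨f, fun r => ⟨fun hr => hJI ((hf r).1 hr), fun hr => cancel r ((hf _).2 ?_)⟩⟩
    simpa only [mul_right_comm] using hIw _ hr
  · rintro ⟨f, hf⟩
    refine ⟨f * w, fun r => ⟨fun hr => ?_, fun hr => cancel r ((hf _).2 ?_)⟩⟩
    · simpa only [mul_assoc] using hIw _ ((hf r).1 hr)
    · rw [mul_right_comm, mul_assoc]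
      exact hJI hr

theorem Ideal.map_colon_singleton_of_equiv (e : R ≃+* R') (J : Ideal R) (f : R) :
    (J.colon {f}).map e = (J.map e).colon {e f} := by
  ext r
  obtain ⟨s, rfl⟩ := e.surjective r
  simp only [Ideal.apply_mem_of_equiv_iff, Submodule.mem_colon_singleton, smul_eq_mul, ← map_mul]

theorem isAssociatedPrime_quotient_map_ringEquiv [IsNoetherianRing R] [IsNoetherianRing R']
    (e : R ≃+* R') {P J : Ideal R} :
    IsAssociatedPrime (P.map e) (R' ⧸ J.map e) ↔ IsAssociatedPrime P (R ⧸ J) := by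
  have comap_map (A : Ideal R) : (A.map e).comap e = A :=
    Ideal.comap_map_of_bijective e e.bijective
  have map_injective : Function.Injective (Ideal.map e : Ideal R → Ideal R') :=
    Function.LeftInverse.injective comap_map
  simp only [isAssociatedPrime_quotient_iff, e.surjective.exists,
    ← Ideal.map_colon_singleton_of_equiv, map_injective.eq_iff]
  exact and_congr_left fun _ =>
    ⟨fun h => comap_map P ▸ h.comap e, fun _ => Ideal.map_isPrime_of_equiv e⟩

theorem Ideal.pow_mul_span_singleton_pow_le {I J : Ideal R} {w : R}
    (h : I * Ideal.span {w} ≤ J) (k : ℕ) : I ^ k * Ideal.span {w ^ k} ≤ J ^ k := by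
  rw [← Ideal.span_singleton_pow, ← mul_pow]
  exact Ideal.pow_right_mono h k

end AssociatedPrimes

namespace MvPolynomial

variable {R σ : Type*} [CommRing R]

theorem C_mem_map_C_iff {P : Ideal R} {a : R} :
    C a ∈ P.map (C : R →+* MvPolynomial σ R) ↔ a ∈ P := by
  classical
  exact ⟨fun h => by simpa using mem_map_C_iff.1 h 0, Ideal.mem_map_of_mem C⟩

theorem isPrime_map_C_iff {P : Ideal R} :
    (P.map (C : R →+* MvPolynomial σ R)).IsPrime ↔ P.IsPrime := by
  refine ⟨fun h => ?_, fun _ => ?_⟩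
  · have hP : (P.map (C : R →+* MvPolynomial σ R)).comap C = P := by
      ext a
      exact C_mem_map_C_iff
    exact hP ▸ h.comap C
  · rw [← Ideal.mk_ker (I := P), ← ker_map]
    exact RingHom.ker_isPrime _

theorem map_C_colon_singleton (J : Ideal R) (g : R) :
    (J.colon {g}).map (C : R →+* MvPolynomial σ R) = (J.map C).colon {C g} := by
  ext r
  simp only [mem_map_C_iff, Submodule.mem_colon_singleton, smul_eq_mul, mul_comm r, coeff_C_mul,
    mul_comm g]

theorem map_C_iInf {ι : Sort*} (F : ι → Ideal R) :
    (⨅ i, F i).map (C : R →+* MvPolynomial σ R) = ⨅ i, (F i).map C := by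
  ext r
  simp only [mem_map_C_iff, Submodule.mem_iInf]
  exact forall_comm

theorem exists_colon_coeff_eq_of_map_C_eq_colon {P J : Ideal R} [P.IsPrime]
    {F : MvPolynomial σ R} (h : P.map C = (J.map C).colon {F}) :
    ∃ m, P = J.colon {F.coeff m} := by
  -- `P` is the finite intersection of the colon ideals `J : F.coeff m`, so being prime it is
  -- one of them.
  have key (a : R) : a ∈ P ↔ ∀ m, a ∈ J.colon {F.coeff m} := by
    rw [← C_mem_map_C_iff (σ := σ), h]
    simp only [Submodule.mem_colon_singleton, smul_eq_mul, mem_map_C_iff, coeff_C_mul]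
  have hinf : F.support.inf (fun m => J.colon {F.coeff m}) ≤ P := by
    intro a ha
    refine (key a).2 fun m => ?_
    by_cases hm : m ∈ F.support
    · exact Submodule.mem_finsetInf.1 ha m hm
    · simp [notMem_support_iff.1 hm]
  obtain ⟨m, -, hm⟩ := (Ideal.IsPrime.inf_le' ‹_›).1 hinf
  exact ⟨m, le_antisymm (fun a ha => (key a).1 ha m) hm⟩

theorem isAssociatedPrime_quotient_map_C_iff [Finite σ] [IsNoetherianRing R] {P J : Ideal R} :
    IsAssociatedPrime (P.map (C : R →+* MvPolynomial σ R)) (MvPolynomial σ R ⧸ J.map C) ↔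
      IsAssociatedPrime P (R ⧸ J) := by
  simp only [isAssociatedPrime_quotient_iff, isPrime_map_C_iff]
  refine and_congr_right fun _ => ⟨fun ⟨_, hF⟩ =>
    let ⟨_, hm⟩ := exists_colon_coeff_eq_of_map_C_eq_colon hF; ⟨_, hm⟩,
    fun ⟨g, hg⟩ => ⟨C g, by rw [hg, map_C_colon_singleton]⟩⟩

theorem prod_X_compl_pow_notMem_span_X_image [Nontrivial R] [Fintype σ] [DecidableEq σ]
    (S : Finset σ) (k : ℕ) :
    (∏ j ∈ Sᶜ, X j : MvPolynomial σ R) ^ k ∉ Ideal.span (X '' (S : Set σ)) := by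
  set v : σ → R := fun i => if i ∈ S then 0 else 1
  have hker : Ideal.span (X '' (S : Set σ)) ≤ RingHom.ker (eval v) := by
    rw [Ideal.span_le]
    rintro _ ⟨i, hi, rfl⟩
    simp_all [v]
  intro h
  have h1 : eval v ((∏ j ∈ Sᶜ, X j) ^ k) = 1 := by
    simp +contextual [v, Finset.prod_eq_one]
  simpa [h1] using hker h

variable (R) (p : σ → Prop) [DecidablePred p]

def complSubtypeEquiv :
    MvPolynomial σ R ≃+* MvPolynomial {i // ¬p i} (MvPolynomial {i // p i} R) :=
  ((renameEquiv R ((Equiv.sumCompl p).symm.trans (Equiv.sumComm _ _))).trans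
    (sumAlgEquiv R _ _)).toRingEquiv

variable {R p}

theorem complSubtypeEquiv_X_of_pos {i : σ} (h : p i) :
    complSubtypeEquiv R p (X i) = C (X ⟨i, h⟩) := by
  simp only [complSubtypeEquiv, AlgEquiv.coe_ringEquiv,
    AlgEquiv.trans_apply, renameEquiv_apply, rename_X, Equiv.trans_apply,
    Equiv.sumCompl_symm_apply_of_pos h, Equiv.sumComm_apply, Sum.swap_inl]
  rw [← sumAlgEquiv_symm_C_X, AlgEquiv.apply_symm_apply]

theorem map_complSubtypeEquiv_span_X_image {t : Set σ} (ht : ∀ i ∈ t, p i) :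
    (Ideal.span (X '' t)).map (complSubtypeEquiv R p) =
      (Ideal.span (X '' (Subtype.val ⁻¹' t))).map C := by
  rw [Ideal.map_span, Ideal.map_span, Set.image_image, Set.image_image]
  congr 1
  ext q
  constructor
  · rintro ⟨i, hi, rfl⟩
    exact ⟨⟨i, ht i hi⟩, hi, (complSubtypeEquiv_X_of_pos _).symm⟩
  · rintro ⟨i, hi, rfl⟩
    exact ⟨i, hi, complSubtypeEquiv_X_of_pos _⟩

end MvPolynomial

section DualIdeal

variable {V K : Type*} [Field K]

theorem le_dualIdeal_iff {E : Finset (Finset V)} {I : Ideal (MvPolynomial V K)} :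
    I ≤ dualIdeal K E ↔ ∀ e ∈ E, I ≤ Ideal.span (X '' (e : Set V)) :=
  le_iInf₂_iff

theorem dualIdeal_le_span_X_image {E : Finset (Finset V)} {e : Finset V} (he : e ∈ E) :
    dualIdeal K E ≤ Ideal.span (X '' (e : Set V)) :=
  le_dualIdeal_iff.1 le_rfl e he

theorem dualIdeal_anti {E E' : Finset (Finset V)} (h : E' ⊆ E) :
    dualIdeal K E ≤ dualIdeal K E' :=
  le_dualIdeal_iff.2 fun _ he => dualIdeal_le_span_X_image (h he)

theorem dualIdeal_filter_subset_mul_span_prod_X_compl_le [Fintype V] [DecidableEq V]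
    (E : Finset (Finset V)) (S : Finset V) :
    dualIdeal K (E.filter (· ⊆ S)) * Ideal.span {∏ j ∈ Sᶜ, X j} ≤ dualIdeal K E := by
  refine le_dualIdeal_iff.2 fun e he => ?_
  by_cases heS : e ⊆ S
  · exact Ideal.mul_le_left.trans (dualIdeal_le_span_X_image (mem_filter.2 ⟨he, heS⟩))
  · obtain ⟨j, hje, hjS⟩ := not_subset.1 heS
    refine Ideal.mul_le_right.trans ((Ideal.span_singleton_le_iff_mem _).2 ?_)
    rw [← mul_prod_erase _ _ (mem_compl.2 hjS)]
    exact Ideal.mul_mem_right _ _ (Ideal.subset_span ⟨j, hje, rfl⟩)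

theorem map_complSubtypeEquiv_dualIdeal [DecidableEq V] {p : V → Prop} [DecidablePred p]
    {E : Finset (Finset V)} (hE : ∀ e ∈ E, ∀ i ∈ e, p i) :
    (dualIdeal K E).map (complSubtypeEquiv K p) =
      (dualIdeal K (E.image fun e => e.subtype p)).map C := by
  rw [← Ideal.comap_symm]
  simp only [dualIdeal, Ideal.comap_iInf, iInf_finset_image, map_C_iInf]
  refine iInf_congr fun e => iInf_congr fun he => ?_
  rw [Ideal.comap_symm, map_complSubtypeEquiv_span_X_image (hE e he)]
  congr
  ext
  simp

end DualIdeal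

theorem stmt9_general {K : Type*} [Field K] {n : ℕ} (E : Finset (Finset (Fin n)))
    (S : Finset (Fin n)) :
    IsAssociatedPrime (Ideal.span (X '' (S : Set (Fin n))) : Ideal (MvPolynomial (Fin n) K))
        (MvPolynomial (Fin n) K ⧸ ((dualIdeal K E) ^ 2)) ↔
      IsAssociatedPrime
        (Ideal.span (Set.range X) : Ideal (MvPolynomial {i : Fin n // i ∈ S} K))
        (MvPolynomial {i : Fin n // i ∈ S} K ⧸
          ((dualIdeal K ((E.filter (fun e => e ⊆ S)).image
              (fun e => e.subtype (fun i => i ∈ S)))) ^ 2)) := by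
  have hP : (Ideal.span (X '' (S : Set (Fin n)))).map (complSubtypeEquiv K (· ∈ S)) =
      (Ideal.span (Set.range X)).map C := by
    rw [map_complSubtypeEquiv_span_X_image (p := (· ∈ S)) (t := S) fun _ hi => hi,
      Set.eq_univ_of_forall (s := Subtype.val ⁻¹' (S : Set (Fin n))) fun i => i.2,
      Set.image_univ]
  have hI : ((dualIdeal K (E.filter (· ⊆ S))) ^ 2).map (complSubtypeEquiv K (· ∈ S)) =
      ((dualIdeal K ((E.filter (· ⊆ S)).image (fun e => e.subtype (· ∈ S)))) ^ 2).map C := by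
    rw [Ideal.map_pow, Ideal.map_pow,
      map_complSubtypeEquiv_dualIdeal (E := E.filter (· ⊆ S)) fun e he => (mem_filter.1 he).2]
  have hmul := dualIdeal_filter_subset_mul_span_prod_X_compl_le (K := K) E S
  rw [isAssociatedPrime_quotient_iff_of_mul_le (prod_X_compl_pow_notMem_span_X_image S 2)
      (Ideal.pow_right_mono (dualIdeal_anti (filter_subset _ E)) 2)
      (Ideal.pow_mul_span_singleton_pow_le hmul 2),
    ← isAssociatedPrime_quotient_map_ringEquiv (complSubtypeEquiv K (· ∈ S)), hP, hI,
    isAssociatedPrime_quotient_map_C_iff]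

theorem stmt9 {K : Type*} [Field K] {n m : ℕ} (E : Finset (Finset (Fin n)))
    (hm : ∀ e ∈ E, e.card = m) (S : Finset (Fin n)) (hq : m ≤ S.card) :
    IsAssociatedPrime (Ideal.span (X '' (S : Set (Fin n))) : Ideal (MvPolynomial (Fin n) K))
        (MvPolynomial (Fin n) K ⧸ ((dualIdeal K E) ^ 2)) ↔
      IsAssociatedPrime
        (Ideal.span (Set.range X) : Ideal (MvPolynomial {i : Fin n // i ∈ S} K))
        (MvPolynomial {i : Fin n // i ∈ S} K ⧸
          ((dualIdeal K ((E.filter (fun e => e ⊆ S)).image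
              (fun e => e.subtype (fun i => i ∈ S)))) ^ 2)) :=
  stmt9_general E S
end
end

section
/- Let n = 4z+2 with z ≥ 1 and H the 3-hypergraph with edges {x_1,x_2,x_3}, {x_3,x_4,x_5}, ..., {x_{n-3},x_{n-2},x_{n-1}}, {x_{n-1},x_n,x_1}. Then the tuple A with a_i = 1 for i odd and a_i = 0 for i even is a 2-cover of H that is not a sum of two 1-covers, but for every k ≤ n, A + e_k is a sum of two 1-covers of H. -/
open MvPolynomial Finset

noncomputable section

/-!
Call the vertices `x_{2i+1}` (0-based: the even indices) nodes. Consecutive nodes share an edge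
whose third vertex lies in no other edge, so the `2z+1` nodes form an odd cycle, and `A` is `1`
exactly on the nodes. If `A = b + c` with `b`, `c` 1-covers, then `b` is `0` off the nodes and
every edge contains exactly one node where `b = 1`; as every node lies in two edges, summing over
the edges gives `2 ∑ b = 2z + 1`, which is absurd. For `A + e_k`, let `b` alternate `1, 0, 1, …`
around the cycle starting at a suitable node: it is a 1-cover, and the only edge on which it sums
to `2`, the one where the alternation closes up, can be made to contain `k`, so `A + e_k - b` is a
1-cover too.
-/

def cyc3Edge (n : ℕ) (hn : 0 < n) (j : ℕ) : Finset (Fin n) :=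
  {⟨2 * j % n, Nat.mod_lt _ hn⟩, ⟨(2 * j + 1) % n, Nat.mod_lt _ hn⟩,
    ⟨(2 * j + 2) % n, Nat.mod_lt _ hn⟩}

theorem forall_mem_cyc3 {n : ℕ} (hn : 0 < n) {P : Finset (Fin n) → Prop} :
    (∀ e ∈ cyc3 n hn, P e) ↔ ∀ j < (n + 1) / 2, P (cyc3Edge n hn j) := by
  simp [cyc3, cyc3Edge]

theorem cyc3_nonempty {n : ℕ} (hn : 0 < n) : (cyc3 n hn).Nonempty := by
  simp [cyc3]; omega

theorem mod_ne_add_mod {n x d : ℕ} (hd : 0 < d) (hdn : d < n) : x % n ≠ (x + d) % n := by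
  intro h
  have := Nat.sub_mod_eq_zero_of_mod_eq h.symm
  rw [Nat.add_sub_cancel_left, Nat.mod_eq_of_lt hdn] at this
  omega

theorem sum_cyc3Edge {n : ℕ} (hn : 0 < n) (h3 : 3 ≤ n) (a : Fin n → ℕ) (j : ℕ) :
    ∑ i ∈ cyc3Edge n hn j, a i =
      a ⟨2 * j % n, Nat.mod_lt _ hn⟩ + a ⟨(2 * j + 1) % n, Nat.mod_lt _ hn⟩ +
        a ⟨(2 * j + 2) % n, Nat.mod_lt _ hn⟩ := by
  have h01 := mod_ne_add_mod (n := n) (x := 2 * j) (d := 1) (by omega) (by omega)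
  have h02 := mod_ne_add_mod (n := n) (x := 2 * j) (d := 2) (by omega) (by omega)
  have h12 := mod_ne_add_mod (n := n) (x := 2 * j + 1) (d := 1) (by omega) (by omega)
  rw [cyc3Edge, sum_insert (by simp [Fin.ext_iff, h01, h02]),
    sum_insert (by simpa [Fin.ext_iff] using h12), sum_singleton, add_assoc]

theorem isCover_of_forall_le_sum {V : Type*} {E : Finset (Finset V)} {k : ℕ} {a : V → ℕ}
    (hE : E.Nonempty) (hk : 0 < k) (h : ∀ e ∈ E, k ≤ ∑ i ∈ e, a i) : IsCover E k a := by
  refine ⟨?_, h⟩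
  rintro rfl
  obtain ⟨e, he⟩ := hE
  simpa using (h e he).trans_lt' hk

theorem sumTwoOneCovers_of_le {V : Type*} {E : Finset (Finset V)} {a b : V → ℕ}
    (hE : E.Nonempty) (hba : b ≤ a) (hb : ∀ e ∈ E, 1 ≤ ∑ i ∈ e, b i)
    (hlt : ∀ e ∈ E, ∑ i ∈ e, b i < ∑ i ∈ e, a i) : SumTwoOneCovers E a := by
  refine ⟨b, a - b, isCover_of_forall_le_sum hE one_pos hb,
    isCover_of_forall_le_sum hE one_pos fun e he => ?_, (add_tsub_cancel_of_le hba).symm⟩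
  rw [Pi.sub_def, Finset.sum_tsub_distrib e fun i _ => hba i]
  exact Nat.sub_pos_of_lt (hlt e he)

section OddCycle

variable {z : ℕ}

theorem cyc3Edge_indices_mod {j : ℕ} (hj : j < 2 * z + 1) :
    2 * j % (4 * z + 2) = 2 * j ∧ (2 * j + 1) % (4 * z + 2) = 2 * j + 1 ∧
      (2 * j + 2) % (4 * z + 2) = if j = 2 * z then 0 else 2 * j + 2 := by
  refine ⟨Nat.mod_eq_of_lt (by omega), Nat.mod_eq_of_lt (by omega), ?_⟩
  split_ifs with h
  · subst h; rw [show 2 * (2 * z) + 2 = 4 * z + 2 by ring, Nat.mod_self]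
  · exact Nat.mod_eq_of_lt (by omega)

theorem sum_cyc3Edge_altCover (hz : 1 ≤ z) {j : ℕ} (hj : j < 2 * z + 1) :
    ∑ i ∈ cyc3Edge (4 * z + 2) (by omega) j, altCover (4 * z + 2) i = 2 := by
  obtain ⟨h0, h1, h2⟩ := cyc3Edge_indices_mod hj
  rw [sum_cyc3Edge _ (by omega)]
  simp only [altCover, h0, h1, h2]
  split_ifs <;> omega

theorem sum_range_shift_of_eq {M : Type*} [AddCancelCommMonoid M] {f : ℕ → M} {m : ℕ}
    (h : f m = f 0) : ∑ j ∈ range m, f (j + 1) = ∑ j ∈ range m, f j := by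
  have := (sum_range_succ f m).symm.trans (sum_range_succ' f m)
  rw [h] at this
  exact (add_right_cancel this).symm

theorem not_sumTwoOneCovers_altCover (hz : 1 ≤ z) :
    ¬ SumTwoOneCovers (cyc3 (4 * z + 2) (by omega)) (altCover (4 * z + 2)) := by
  rintro ⟨b, c, ⟨-, hb⟩, ⟨-, hc⟩, hbc⟩
  have hpt : ∀ x, b ⟨x % (4 * z + 2), Nat.mod_lt _ (by omega)⟩ +
      c ⟨x % (4 * z + 2), Nat.mod_lt _ (by omega)⟩ = if x % 2 = 0 then 1 else 0 := by
    intro x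
    have := congr_fun hbc ⟨x % (4 * z + 2), Nat.mod_lt _ (by omega)⟩
    rw [altCover, Nat.mod_mod_of_dvd x ⟨2 * z + 1, by ring⟩] at this
    exact this.symm
  let f : ℕ → ℕ := fun j => b ⟨2 * j % (4 * z + 2), Nat.mod_lt _ (by omega)⟩
  have hedge : ∀ j ∈ range (2 * z + 1), f j + f (j + 1) = 1 := by
    intro j hj
    rw [mem_range] at hj
    have hbj := (forall_mem_cyc3 _).1 hb j (by omega)
    have hcj := (forall_mem_cyc3 _).1 hc j (by omega)
    rw [sum_cyc3Edge _ (by omega)] at hbj hcj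
    have hpt0 := hpt (2 * j)
    have hpt1 := hpt (2 * j + 1)
    have hpt2 := hpt (2 * j + 2)
    show b _ + b ⟨(2 * j + 2) % (4 * z + 2), _⟩ = 1
    split_ifs at * <;> omega
  have hwrap : f (2 * z + 1) = f 0 := by
    simp only [f, show 2 * (2 * z + 1) = 4 * z + 2 by ring, Nat.mod_self, mul_zero, Nat.zero_mod]
  have := sum_congr rfl hedge
  rw [sum_add_distrib, sum_range_shift_of_eq hwrap, sum_const, card_range, smul_eq_mul] at this
  omega

/-- With node `i` the vertex `2 * i`: `1` on the nodes at even cyclic distance `i - t` from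
node `t`. On the odd cycle of `2 * z + 1` nodes, and for `t ≤ 2 * z + 1`, that distance is
even iff `t ≤ i ↔ Even (i + t)`; nodes `t - 1` and `t` both get `1`. -/
def alternatingFrom (n t : ℕ) : Fin n → ℕ :=
  fun i => if (i : ℕ) % 2 = 0 ∧ (t ≤ i / 2 ↔ (i / 2 + t) % 2 = 0) then 1 else 0

theorem alternatingFrom_le_altCover (n t : ℕ) : alternatingFrom n t ≤ altCover n := by
  intro i
  simp only [alternatingFrom, altCover]
  split_ifs <;> omega

theorem one_le_sum_alternatingFrom (hz : 1 ≤ z) {t j : ℕ} (ht : t ≤ 2 * z + 1)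
    (hj : j < 2 * z + 1) :
    1 ≤ ∑ i ∈ cyc3Edge (4 * z + 2) (by omega) j, alternatingFrom (4 * z + 2) t i := by
  obtain ⟨h0, h1, h2⟩ := cyc3Edge_indices_mod hj
  rw [sum_cyc3Edge _ (by omega)]
  simp only [alternatingFrom, h0, h1, h2]
  split_ifs <;> omega

/-- For `t = (k + 1) / 2`, the edge joining nodes `t - 1` and `t` contains `k`. -/
theorem sum_alternatingFrom_lt (hz : 1 ≤ z) (k : Fin (4 * z + 2)) {j : ℕ} (hj : j < 2 * z + 1) :
    ∑ i ∈ cyc3Edge (4 * z + 2) (by omega) j,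
        alternatingFrom (4 * z + 2) (((k : ℕ) + 1) / 2) i <
      ∑ i ∈ cyc3Edge (4 * z + 2) (by omega) j,
        (altCover (4 * z + 2) + Pi.single k 1 : Fin (4 * z + 2) → ℕ) i := by
  have hk := k.isLt
  rw [Pi.add_def, sum_add_distrib, sum_cyc3Edge_altCover hz hj, sum_cyc3Edge _ (by omega),
    sum_cyc3Edge _ (by omega)]
  obtain ⟨h0, h1, h2⟩ := cyc3Edge_indices_mod hj
  simp only [alternatingFrom, Pi.single_apply, Fin.ext_iff, h0, h1, h2]
  split_ifs <;> omega

end OddCycle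

theorem stmt13 {n z : ℕ} (hz : 1 ≤ z) (hn : n = 4 * z + 2) :
    IsCover (cyc3 n (by omega)) 2 (altCover n) ∧
      ¬ SumTwoOneCovers (cyc3 n (by omega)) (altCover n) ∧
      ∀ k : Fin n, SumTwoOneCovers (cyc3 n (by omega)) (altCover n + Pi.single k 1) := by
  subst hn
  have hpos : 0 < 4 * z + 2 := by omega
  refine ⟨isCover_of_forall_le_sum (cyc3_nonempty hpos) two_pos ?_,
    not_sumTwoOneCovers_altCover hz, fun k => ?_⟩
  · exact (forall_mem_cyc3 hpos).2 fun j hj => (sum_cyc3Edge_altCover hz (by omega)).ge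
  · refine sumTwoOneCovers_of_le (cyc3_nonempty hpos)
      ((alternatingFrom_le_altCover _ (((k : ℕ) + 1) / 2)).trans le_self_add) ?_ ?_
    · exact (forall_mem_cyc3 hpos).2 fun j hj =>
        one_le_sum_alternatingFrom hz (by omega) (by omega)
    · exact (forall_mem_cyc3 hpos).2 fun j hj => sum_alternatingFrom_lt hz k (by omega)
end
end

section
/- Let P ⊆ K[x_1,...,x_n] be a monomial prime. Then P is an associated prime of (I(H)^∨)^2 for some 3-hypergraph H of size n if and only if height(P) ≥ 3. -/
open MvPolynomial Finset

noncomputable section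

/-! The ideal `J = (I(H)^∨)^2` is generated by the monomials `x^T x^T'` with `T, T'`
transversals of `H`. An associated prime `P_S` of `J` contains `J`, hence `I(H)^∨`, hence one of
the primes `(x_i : i ∈ e)`, so `S` contains an edge. Conversely `P_S = J : x^a` as soon as
`x^a ∉ J` and `x_i x^a ∈ J` for all `i ∈ S`. For `|S| = 3` take the single edge `S` and
`a = e_u`. For `|S| ≥ 4` write `S` as an odd cycle `c_0, …, c_{L-1}` together with one or two
further vertices, thicken every cycle edge `{c_j, c_{j+1}}` by one of them, `d_j`, and let `a`
be the indicator of the cycle. Two transversals below `a` would be disjoint vertex covers of an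
odd cycle, which do not exist; below `a + e_x`, for `x` in the edge `{c_j, c_{j+1}, d_j}`, lie
the two colour classes of the path `c_{j+1}, …, c_j`, one of them enlarged by `x`. -/

theorem ZMod.val_add_one_eq_or {L : ℕ} [NeZero L] (z : ZMod L) :
    (z + 1).val = z.val + 1 ∨ z + 1 = 0 := by
  rw [← ZMod.val_eq_zero, ZMod.val_add, ZMod.val_one_eq_one_mod]
  have := z.val_lt
  rcases Nat.lt_or_ge 1 L with h | h
  · rw [Nat.mod_eq_of_lt h]
    rcases Nat.lt_or_ge (z.val + 1) L with h' | h'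
    · exact Or.inl (Nat.mod_eq_of_lt h')
    · right; rw [show z.val + 1 = L by omega, Nat.mod_self]
  · obtain rfl : L = 1 := by have := NeZero.ne L; omega
    simp [Nat.mod_one]

def IsCycleCover {L : ℕ} (A : Set (ZMod L)) : Prop :=
  ∀ j, j ∈ A ∨ j + 1 ∈ A

theorem IsCycleCover.not_disjoint {L : ℕ} (hL : Odd L) {A B : Set (ZMod L)}
    (hA : IsCycleCover A) (hB : IsCycleCover B) : ¬ Disjoint A B := by
  intro hAB
  have hstep : ∀ j, j + 1 ∈ A ↔ j ∉ A := fun j =>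
    ⟨fun hj1 hj => hAB.notMem_of_mem_left hj1 ((hB j).resolve_left (hAB.notMem_of_mem_left hj)),
      fun hj => (hA j).resolve_left hj⟩
  have halt : ∀ k : ℕ, ((k : ZMod L) ∈ A ↔ (Even k ↔ (0 : ZMod L) ∈ A)) := by
    intro k
    induction k with
    | zero => simp
    | succ k ih => rw [Nat.cast_succ, hstep, ih, Nat.even_add_one]; tauto
  have := halt L
  rw [ZMod.natCast_self, iff_false_intro (Nat.not_even_iff_odd.mpr hL)] at this
  tauto

theorem exists_isCycleCover_compl_covers_of_ne {L : ℕ} [NeZero L] (j : ZMod L) :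
    ∃ A : Finset (ZMod L), IsCycleCover (A : Set (ZMod L)) ∧
      ∀ k ≠ j, k ∈ Aᶜ ∨ k + 1 ∈ Aᶜ := by
  -- colour the path `j + 1, j + 2, …, j` alternately, so that both of its ends lie in `A`
  refine ⟨univ.filter fun k => Even (k - (j + 1)).val, fun k => ?_, fun k hk => ?_⟩
  all_goals
    simp only [coe_filter, Set.mem_ofPred_eq, mem_compl, mem_filter, mem_univ, true_and,
      show k + 1 - (j + 1) = k - (j + 1) + 1 by ring]
    rcases (k - (j + 1)).val_add_one_eq_or with h | h
  · rw [h, Nat.even_add_one]; tauto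
  · rw [h, ZMod.val_zero]; simp
  · rw [h, Nat.even_add_one]; tauto
  · rw [sub_add_eq_add_sub, add_sub_add_right_eq_sub, sub_eq_zero] at h
    exact absurd h hk

namespace MvPolynomial

variable {σ R : Type*}

theorem isPrime_span_X_image [CommRing R] [IsDomain R] (s : Set σ) :
    (Ideal.span (X '' s) : Ideal (MvPolynomial σ R)).IsPrime := by
  classical
  set P : Ideal (MvPolynomial σ R) := Ideal.span (X '' s)
  let φ : MvPolynomial σ R →ₐ[R] MvPolynomial σ R := aeval fun i => if i ∈ s then 0 else X i
  have hX : ∀ i, X i - φ (X i) ∈ P := fun i => by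
    by_cases hi : i ∈ s
    · simpa [φ, hi] using (Ideal.subset_span (Set.mem_image_of_mem X hi) : X i ∈ P)
    · simp [φ, hi]
  -- `φ` kills exactly the variables of `s`, so `f ≡ φ f` modulo `P`
  have hsub : ∀ f, f - φ f ∈ P := fun f => by
    induction f using MvPolynomial.induction_on with
    | C a => simp [φ]
    | add p q hp hq => simpa [add_sub_add_comm] using add_mem hp hq
    | mul_X p i hp =>
      rw [map_mul, show p * X i - φ p * φ (X i) = (p - φ p) * X i + φ p * (X i - φ (X i)) by ring]
      exact add_mem (P.mul_mem_right _ hp) (P.mul_mem_left _ (hX i))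
  have hker : RingHom.ker φ = P := by
    refine le_antisymm (fun f hf => by simpa [RingHom.mem_ker.mp hf] using hsub f) ?_
    rw [Ideal.span_le]
    rintro _ ⟨i, hi, rfl⟩
    simp [φ, hi]
  exact hker ▸ RingHom.ker_isPrime φ

theorem X_mem_ideal_span_X_image_iff [CommSemiring R] [Nontrivial R] {s : Set σ} {i : σ} :
    (X i : MvPolynomial σ R) ∈ Ideal.span (X '' s) ↔ i ∈ s := by
  classical
  refine ⟨fun h => ?_, fun h => Ideal.subset_span ⟨i, h, rfl⟩⟩
  obtain ⟨j, hj, hij⟩ := mem_ideal_span_X_image.mp h (Finsupp.single i 1) (by simp [support_X])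
  rwa [Finsupp.single_apply_ne_zero.mp hij |>.1] at hj

open scoped Pointwise in
theorem span_monomial_image_mul [CommSemiring R] (A B : Set (σ →₀ ℕ)) :
    Ideal.span ((monomial · (1 : R)) '' A) * Ideal.span ((monomial · (1 : R)) '' B) =
      Ideal.span ((monomial · (1 : R)) '' (A + B)) := by
  rw [Ideal.span_mul_span', ← Set.image2_mul, ← Set.image2_add, Set.image_image2,
    Set.image2_image_left, Set.image2_image_right]
  simp only [monomial_mul, one_mul]

end MvPolynomial

section

variable {V : Type*}

def indicatorExp (T : Finset V) : V →₀ ℕ :=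
  ∑ i ∈ T, Finsupp.single i 1

theorem indicatorExp_apply [DecidableEq V] (T : Finset V) (x : V) :
    indicatorExp T x = if x ∈ T then 1 else 0 := by
  simp [indicatorExp, Finsupp.finsetSum_apply, Finsupp.single_apply]

theorem indicatorExp_le_iff {T : Finset V} {d : V →₀ ℕ} :
    indicatorExp T ≤ d ↔ ∀ i ∈ T, d i ≠ 0 := by
  classical
  refine ⟨fun h i hi => ?_, fun h i => ?_⟩
  · have := h i
    rw [indicatorExp_apply, if_pos hi] at this
    omega
  · rw [indicatorExp_apply]
    split_ifs with hi
    · exact Nat.one_le_iff_ne_zero.mpr (h i hi)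
    · exact Nat.zero_le _

theorem indicatorExp_singleton (x : V) : indicatorExp {x} = Finsupp.single x 1 :=
  sum_singleton _ _

theorem indicatorExp_union [DecidableEq V] {T T' : Finset V} (h : Disjoint T T') :
    indicatorExp (T ∪ T') = indicatorExp T + indicatorExp T' :=
  sum_union h

theorem indicatorExp_insert_le [DecidableEq V] (x : V) (T : Finset V) :
    indicatorExp (insert x T) ≤ Finsupp.single x 1 + indicatorExp T := by
  by_cases hx : x ∈ T
  · simp [insert_eq_of_mem hx]
  · simp [indicatorExp, sum_insert hx]

def IsTransversal (E : Finset (Finset V)) (T : Finset V) : Prop :=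
  ∀ e ∈ E, ∃ i ∈ e, i ∈ T

theorem IsTransversal.inter [DecidableEq V] {E : Finset (Finset V)} {T : Finset V}
    (hT : IsTransversal E T) {S : Finset V} (hES : ∀ e ∈ E, e ⊆ S) : IsTransversal E (T ∩ S) :=
  fun e he => by
    obtain ⟨i, hie, hiT⟩ := hT e he
    exact ⟨i, hie, mem_inter.mpr ⟨hiT, hES e he hie⟩⟩

variable (K : Type*) [Field K]

theorem dualIdeal_eq_span (E : Finset (Finset V)) :
    dualIdeal K E =
      Ideal.span ((monomial · (1 : K)) '' (indicatorExp '' {T | IsTransversal E T})) := by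
  ext f
  simp only [dualIdeal, Submodule.mem_iInf, mem_ideal_span_monomial_image, mem_ideal_span_X_image,
    Set.exists_mem_image, Set.mem_ofPred_eq, indicatorExp_le_iff]
  constructor
  · intro hf d hd
    refine ⟨d.support, fun e he => ?_, fun i hi => Finsupp.mem_support_iff.mp hi⟩
    obtain ⟨i, hie, hi⟩ := hf e he d hd
    exact ⟨i, hie, Finsupp.mem_support_iff.mpr hi⟩
  · intro hf e he d hd
    obtain ⟨T, hT, hTd⟩ := hf d hd
    obtain ⟨i, hie, hiT⟩ := hT e he
    exact ⟨i, hie, hTd i hiT⟩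

variable {K}

theorem mem_dualIdeal_sq_iff {E : Finset (Finset V)} {f : MvPolynomial V K} :
    f ∈ dualIdeal K E ^ 2 ↔ ∀ d ∈ f.support, ∃ T T', IsTransversal E T ∧ IsTransversal E T' ∧
      indicatorExp T + indicatorExp T' ≤ d := by
  rw [sq, dualIdeal_eq_span, span_monomial_image_mul, mem_ideal_span_monomial_image]
  refine forall₂_congr fun d _ => ⟨?_, ?_⟩
  · rintro ⟨_, ⟨_, ⟨T, hT, rfl⟩, _, ⟨T', hT', rfl⟩, rfl⟩, hle⟩
    exact ⟨T, T', hT, hT', hle⟩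
  · rintro ⟨T, T', hT, hT', hle⟩
    exact ⟨_, ⟨_, ⟨T, hT, rfl⟩, _, ⟨T', hT', rfl⟩, rfl⟩, hle⟩

-- `x^a ∉ (I^∨)^2` but `x_i x^a ∈ (I^∨)^2` for `i ∈ S`, the generators being `x^T x^T'`
def IsCriticalExp (E : Finset (Finset V)) (S : Finset V) (a : V →₀ ℕ) : Prop :=
  (∀ T T', IsTransversal E T → IsTransversal E T' → ¬ indicatorExp T + indicatorExp T' ≤ a) ∧
  ∀ i ∈ S, ∃ T T', IsTransversal E T ∧ IsTransversal E T' ∧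
    indicatorExp T + indicatorExp T' ≤ a + Finsupp.single i 1

theorem IsCriticalExp.colon_eq {E : Finset (Finset V)} {S : Finset V} {a : V →₀ ℕ}
    (hES : ∀ e ∈ E, e ⊆ S) (ha : IsCriticalExp E S a) :
    (dualIdeal K E ^ 2).colon {monomial a (1 : K)} = Ideal.span (X '' (S : Set V)) := by
  classical
  apply le_antisymm
  · intro r hr
    rw [Submodule.mem_colon_singleton, smul_eq_mul, mem_dualIdeal_sq_iff] at hr
    by_contra hrS
    simp only [mem_ideal_span_X_image, not_forall, not_exists, not_and, not_not] at hrS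
    obtain ⟨d, hd, hdS⟩ := hrS
    obtain ⟨T, T', hT, hT', hle⟩ := hr (d + a) (by
      rw [mem_support_iff, coeff_mul_monomial, mul_one]
      exact mem_support_iff.mp hd)
    refine ha.1 _ _ (hT.inter hES) (hT'.inter hES) fun x => ?_
    have hx := hle x
    simp only [Finsupp.add_apply, indicatorExp_apply, mem_inter] at hx ⊢
    by_cases hxS : x ∈ S
    · simp only [hdS x hxS, hxS, and_true] at hx ⊢
      omega
    · simp [hxS]
  · rw [Ideal.span_le]
    rintro _ ⟨i, hi, rfl⟩
    obtain ⟨T, T', hT, hT', hle⟩ := ha.2 i hi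
    rw [SetLike.mem_coe, Submodule.mem_colon_singleton, smul_eq_mul, X, monomial_mul, one_mul,
      mem_dualIdeal_sq_iff, support_monomial, if_neg one_ne_zero]
    rintro d hd
    rw [mem_singleton.mp hd, add_comm]
    exact ⟨T, T', hT, hT', hle⟩

theorem IsCriticalExp.isAssociatedPrime {E : Finset (Finset V)} {S : Finset V} {a : V →₀ ℕ}
    (hES : ∀ e ∈ E, e ⊆ S) (ha : IsCriticalExp E S a) :
    IsAssociatedPrime (Ideal.span (X '' (S : Set V)) : Ideal (MvPolynomial V K))
      (MvPolynomial V K ⧸ dualIdeal K E ^ 2) := by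
  have hP := isPrime_span_X_image (R := K) (S : Set V)
  refine ⟨hP, Ideal.Quotient.mk _ (monomial a 1), ?_⟩
  have : (⊥ : Submodule (MvPolynomial V K) (MvPolynomial V K ⧸ dualIdeal K E ^ 2)).colon
      {Ideal.Quotient.mk _ (monomial a 1)} = (dualIdeal K E ^ 2).colon {monomial a (1 : K)} := by
    ext r
    simp only [Submodule.mem_colon_singleton, Submodule.mem_bot, smul_eq_mul]
    exact Ideal.Quotient.eq_zero_iff_mem
  rw [this, ha.colon_eq hES, hP.radical]

theorem exists_subset_of_isAssociatedPrime {E : Finset (Finset V)} {S : Finset V} {k : ℕ}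
    (hP : IsAssociatedPrime (Ideal.span (X '' (S : Set V)) : Ideal (MvPolynomial V K))
      (MvPolynomial V K ⧸ dualIdeal K E ^ k)) : ∃ e ∈ E, e ⊆ S := by
  have := hP.isPrime
  have hle : dualIdeal K E ^ k ≤ Ideal.span (X '' (S : Set V)) := by
    simpa [Submodule.annihilator_top, Ideal.annihilator_quotient] using hP.annihilator_le
  have hle := Ideal.IsPrime.le_of_pow_le hle
  rw [dualIdeal, ← Finset.inf_eq_iInf] at hle
  obtain ⟨e, he, hle⟩ := hP.isPrime.inf_le'.mp hle
  exact ⟨e, he, fun i hi => X_mem_ideal_span_X_image_iff.mp (hle (Ideal.subset_span ⟨i, hi, rfl⟩))⟩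

theorem disjoint_and_union_subset_of_indicatorExp_add_le [DecidableEq V] {T T' M : Finset V}
    (h : indicatorExp T + indicatorExp T' ≤ indicatorExp M) : Disjoint T T' ∧ T ∪ T' ⊆ M := by
  refine ⟨disjoint_left.mpr fun x hxT hxT' => ?_, fun x hx => ?_⟩
  · have := h x
    simp only [Finsupp.add_apply, indicatorExp_apply, hxT, hxT', if_true] at this
    split_ifs at this <;> omega
  · by_contra hxM
    have := h x
    simp only [Finsupp.add_apply, indicatorExp_apply, hxM, if_false] at this
    rcases mem_union.mp hx with hx | hx <;> simp [hx] at this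

theorem isCriticalExp_singleton {S : Finset V} {u : V} (hu : u ∈ S) :
    IsCriticalExp {S} S (Finsupp.single u 1) := by
  classical
  refine ⟨fun T T' hT hT' hle => ?_, fun i hi => ⟨{u}, {i}, ?_, ?_, ?_⟩⟩
  · rw [← indicatorExp_singleton] at hle
    obtain ⟨hdisj, hsub⟩ := disjoint_and_union_subset_of_indicatorExp_add_le hle
    obtain ⟨x, -, hx⟩ := hT S (mem_singleton_self S)
    obtain ⟨y, -, hy⟩ := hT' S (mem_singleton_self S)
    have hxu := mem_singleton.mp (hsub (mem_union_left _ hx))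
    have hyu := mem_singleton.mp (hsub (mem_union_right _ hy))
    exact disjoint_left.mp hdisj hx (hxu.trans hyu.symm ▸ hy)
  · simpa [IsTransversal] using hu
  · simpa [IsTransversal] using hi
  · simp [indicatorExp_singleton]

section Cycle

variable [DecidableEq V] {L : ℕ} [NeZero L]

def cycleEdges (c d : ZMod L → V) : Finset (Finset V) :=
  univ.image fun j => {c j, c (j + 1), d j}

theorem isTransversal_cycleEdges_iff {c d : ZMod L → V} {T : Finset V} :
    IsTransversal (cycleEdges c d) T ↔ ∀ j, c j ∈ T ∨ c (j + 1) ∈ T ∨ d j ∈ T := by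
  simp [IsTransversal, cycleEdges]

theorem subset_of_mem_cycleEdges {c d : ZMod L → V} {e : Finset V} (he : e ∈ cycleEdges c d) :
    e ⊆ univ.image c ∪ univ.image d := by
  obtain ⟨j, -, rfl⟩ := mem_image.mp he
  simp [insert_subset_iff]

theorem card_of_mem_cycleEdges [Fact (1 < L)] {c d : ZMod L → V} (hc : Function.Injective c)
    (hd : ∀ j k, d j ≠ c k) {e : Finset V} (he : e ∈ cycleEdges c d) : e.card = 3 := by
  obtain ⟨j, -, rfl⟩ := mem_image.mp he
  exact card_eq_three.mpr ⟨_, _, _, hc.ne (by simp), (hd j j).symm, (hd j (j + 1)).symm, rfl⟩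

theorem isCriticalExp_cycleEdges (hL : Odd L) {c d : ZMod L → V} (hc : Function.Injective c)
    (hd : ∀ j k, d j ≠ c k) :
    IsCriticalExp (cycleEdges c d) (univ.image c ∪ univ.image d) (indicatorExp (univ.image c)) := by
  refine ⟨fun T T' hT hT' hle => ?_, fun i hi => ?_⟩
  · obtain ⟨hdisj, hsub⟩ := disjoint_and_union_subset_of_indicatorExp_add_le hle
    -- inside the image of `c` a transversal must meet every cycle edge `{c j, c (j + 1)}`
    have hcover : ∀ W ⊆ univ.image c, IsTransversal (cycleEdges c d) W →
        IsCycleCover {j | c j ∈ W} := fun W hW hW' j => by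
      rcases isTransversal_cycleEdges_iff.mp hW' j with h | h | h
      · exact Or.inl h
      · exact Or.inr h
      · obtain ⟨k, -, hk⟩ := mem_image.mp (hW h)
        exact absurd hk.symm (hd j k)
    refine (hcover T (subset_union_left.trans hsub) hT).not_disjoint hL
      (hcover T' (subset_union_right.trans hsub) hT') ?_
    exact Set.disjoint_left.mpr fun j hj hj' => disjoint_left.mp hdisj hj hj'
  · obtain ⟨j, hij⟩ : ∃ j, i = c j ∨ i = d j := by
      simp only [mem_union, mem_image, mem_univ, true_and] at hi
      rcases hi with ⟨j, rfl⟩ | ⟨j, rfl⟩ <;> exact ⟨j, by simp⟩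
    obtain ⟨A, hA, hAc⟩ := exists_isCycleCover_compl_covers_of_ne j
    have hsplit : indicatorExp (Aᶜ.image c) + indicatorExp (A.image c) =
        indicatorExp (univ.image c) := by
      rw [← indicatorExp_union (disjoint_image hc |>.mpr disjoint_compl_left), ← image_union,
        union_comm, union_compl]
    refine ⟨insert i (Aᶜ.image c), A.image c, ?_, ?_, ?_⟩
    · refine isTransversal_cycleEdges_iff.mpr fun k => ?_
      by_cases hk : k = j
      · subst hk
        rcases hij with rfl | rfl <;> simp
      · rcases hAc k hk with h | h
        · exact Or.inl (mem_insert_of_mem (mem_image_of_mem c h))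
        · exact Or.inr (Or.inl (mem_insert_of_mem (mem_image_of_mem c h)))
    · refine isTransversal_cycleEdges_iff.mpr fun k => ?_
      rcases hA k with h | h
      · exact Or.inl (mem_image_of_mem c h)
      · exact Or.inr (Or.inl (mem_image_of_mem c h))
    · calc indicatorExp (insert i (Aᶜ.image c)) + indicatorExp (A.image c)
          ≤ Finsupp.single i 1 + indicatorExp (Aᶜ.image c) + indicatorExp (A.image c) :=
            by gcongr; exact indicatorExp_insert_le _ _
        _ = indicatorExp (univ.image c) + Finsupp.single i 1 := by rw [add_assoc, hsplit, add_comm]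

end Cycle

theorem exists_cycle_enumeration {S : Finset V} (hS : 4 ≤ S.card) :
    ∃ L, Odd L ∧ 1 < L ∧ ∃ c d : ZMod L → V, Function.Injective c ∧ (∀ j k, d j ≠ c k) ∧
      Set.range c ∪ Set.range d = S := by
  set s := S.card
  -- an odd cycle on all but one or two vertices of `S`; the rest are the pendants `d j`
  set L := 2 * ((s - 2) / 2) + 1
  have : NeZero L := ⟨by omega⟩
  set f : Fin s → V := fun t => S.equivFin.symm t
  have hf : Function.Injective f := Subtype.val_injective.comp S.equivFin.symm.injective
  refine ⟨L, ⟨_, rfl⟩, by omega, fun j => f ⟨j.val, by have := j.val_lt; omega⟩,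
    fun j => f ⟨L + j.val % (s - L), by have := Nat.mod_lt j.val (show 0 < s - L by omega); omega⟩,
    fun j k h => ZMod.val_injective L (by simpa using hf h), fun j k h => ?_, ?_⟩
  · have := Fin.mk.inj_iff.mp (hf h)
    have := k.val_lt
    omega
  apply Set.Subset.antisymm
  · rintro _ (⟨j, rfl⟩ | ⟨j, rfl⟩) <;> exact (S.equivFin.symm _).2
  · intro x hx
    obtain ⟨t, rfl⟩ : ∃ t, f t = x := ⟨S.equivFin ⟨x, hx⟩, by simp [f]⟩
    rcases Nat.lt_or_ge t.val L with ht | ht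
    · refine Or.inl ⟨(t.val : ZMod L), congrArg f (Fin.ext ?_)⟩
      simp [ZMod.val_natCast, Nat.mod_eq_of_lt ht]
    · refine Or.inr ⟨((t.val - L : ℕ) : ZMod L), congrArg f (Fin.ext ?_)⟩
      have := t.isLt
      simp only [ZMod.val_natCast]
      rw [Nat.mod_eq_of_lt (show t.val - L < L by omega),
        Nat.mod_eq_of_lt (show t.val - L < s - L by omega)]
      omega

theorem exists_three_uniform_isCriticalExp [DecidableEq V] {S : Finset V} (hS : 3 ≤ S.card) :
    ∃ E : Finset (Finset V), (∀ e ∈ E, e.card = 3) ∧ (∀ e ∈ E, e ⊆ S) ∧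
      ∃ a, IsCriticalExp E S a := by
  rcases hS.eq_or_lt with hS | hS
  · obtain ⟨u, hu⟩ := card_pos.mp (by omega : 0 < S.card)
    exact ⟨{S}, by simp [hS], by simp, _, isCriticalExp_singleton hu⟩
  · obtain ⟨L, hL, hL1, c, d, hc, hd, hcd⟩ := exists_cycle_enumeration hS
    have : Fact (1 < L) := ⟨hL1⟩
    obtain rfl : S = univ.image c ∪ univ.image d := coe_injective (by simp [← hcd])
    exact ⟨cycleEdges c d, fun e he => card_of_mem_cycleEdges hc hd he,
      fun e he => subset_of_mem_cycleEdges he, _, isCriticalExp_cycleEdges hL hc hd⟩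

end

theorem stmt15 {K : Type*} [Field K] {n : ℕ} (S : Finset (Fin n)) :
    (∃ E : Finset (Finset (Fin n)), (∀ e ∈ E, e.card = 3) ∧
        IsAssociatedPrime
          (Ideal.span (X '' (S : Set (Fin n))) : Ideal (MvPolynomial (Fin n) K))
          (MvPolynomial (Fin n) K ⧸ ((dualIdeal K E) ^ 2))) ↔
      3 ≤ S.card := by
  constructor
  · rintro ⟨E, hE, hP⟩
    obtain ⟨e, he, heS⟩ := exists_subset_of_isAssociatedPrime hP
    exact hE e he ▸ card_le_card heS
  · intro hS
    obtain ⟨E, hE, hES, a, ha⟩ := exists_three_uniform_isCriticalExp hS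
    exact ⟨E, hE, ha.isAssociatedPrime hES⟩
end
end
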